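/- Let p be a prime with p ≡ 1 (mod 4), and let c, d be integers with p^2 = c^2 + 4d^2 and gcd(c, p) = 1. Define c_1 = c, d_1 = d, c_{ℓ+1} = c_1·c_ℓ − 4·d_1·d_ℓ, d_{ℓ+1} = c_1·d_ℓ + d_1·c_ℓ. Then gcd(c_ℓ, p) = 1 for all ℓ ≥ 1. -/

import Mathlib

/-! Modulo `p` we have `c² + 4d² ≡ 0` with `c ≢ 0`, and this degenerates the recurrence: it forces
`c·Dₗ ≡ d·Cₗ`, which collapses the recurrence for `C` to `Cₗ₊₁ ≡ 2c·Cₗ`. Hence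
`Cₗ ≡ 2^(ℓ-1)·c^ℓ`, a product of units mod `p` (`2 ≢ 0` since otherwise `c² ≡ 0`). -/

section Recurrence

variable {R : Type*} [CommRing R] {c d : R} {C D : ℕ → R}

lemma mul_D_eq_mul_C (h : c ^ 2 + 4 * d ^ 2 = 0) (hC1 : C 1 = c) (hD1 : D 1 = d)
    (hCr : ∀ ℓ, 1 ≤ ℓ → C (ℓ + 1) = c * C ℓ - 4 * d * D ℓ)
    (hDr : ∀ ℓ, 1 ≤ ℓ → D (ℓ + 1) = c * D ℓ + d * C ℓ) :
    ∀ ℓ, 1 ≤ ℓ → c * D ℓ = d * C ℓ := by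
  rintro (_ | _ | n) hℓ
  · omega
  · rw [hC1, hD1, mul_comm]
  · rw [hCr (n + 1) (by omega), hDr (n + 1) (by omega)]
    linear_combination D (n + 1) * h

lemma C_succ_eq_two_mul_mul [IsDomain R] (h : c ^ 2 + 4 * d ^ 2 = 0) (hc : c ≠ 0)
    (hCD : ∀ ℓ, 1 ≤ ℓ → c * D ℓ = d * C ℓ)
    (hCr : ∀ ℓ, 1 ≤ ℓ → C (ℓ + 1) = c * C ℓ - 4 * d * D ℓ) :
    ∀ ℓ, 1 ≤ ℓ → C (ℓ + 1) = 2 * c * C ℓ := by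
  intro ℓ hℓ
  apply mul_left_cancel₀ hc
  rw [hCr ℓ hℓ]
  linear_combination -4 * d * hCD ℓ hℓ - C ℓ * h

lemma C_eq_two_pow_mul_pow [IsDomain R] (h : c ^ 2 + 4 * d ^ 2 = 0) (hc : c ≠ 0)
    (hC1 : C 1 = c) (hD1 : D 1 = d)
    (hCr : ∀ ℓ, 1 ≤ ℓ → C (ℓ + 1) = c * C ℓ - 4 * d * D ℓ)
    (hDr : ∀ ℓ, 1 ≤ ℓ → D (ℓ + 1) = c * D ℓ + d * C ℓ) :
    ∀ ℓ, 1 ≤ ℓ → C ℓ = 2 ^ (ℓ - 1) * c ^ ℓ := by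
  have hsucc := C_succ_eq_two_mul_mul h hc (mul_D_eq_mul_C h hC1 hD1 hCr hDr) hCr
  intro ℓ hℓ
  induction ℓ, hℓ using Nat.le_induction with
  | base => simp [hC1]
  | succ n hn ih =>
    obtain ⟨m, rfl⟩ := Nat.exists_eq_add_of_le' hn
    rw [hsucc _ hn, ih]
    simp only [Nat.add_sub_cancel]
    ring

lemma two_ne_zero_of_sq_add_four_mul_sq_eq_zero [IsDomain R] (h : c ^ 2 + 4 * d ^ 2 = 0)
    (hc : c ≠ 0) : (2 : R) ≠ 0 := by
  intro h2
  apply hc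
  have h4 : (4 : R) = 2 * 2 := by norm_num
  simpa [h4, h2] using h

lemma C_ne_zero [IsDomain R] (h : c ^ 2 + 4 * d ^ 2 = 0) (hc : c ≠ 0)
    (hC1 : C 1 = c) (hD1 : D 1 = d)
    (hCr : ∀ ℓ, 1 ≤ ℓ → C (ℓ + 1) = c * C ℓ - 4 * d * D ℓ)
    (hDr : ∀ ℓ, 1 ≤ ℓ → D (ℓ + 1) = c * D ℓ + d * C ℓ) :
    ∀ ℓ, 1 ≤ ℓ → C ℓ ≠ 0 := by
  intro ℓ hℓ
  rw [C_eq_two_pow_mul_pow h hc hC1 hD1 hCr hDr ℓ hℓ]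
  exact mul_ne_zero (pow_ne_zero _ (two_ne_zero_of_sq_add_four_mul_sq_eq_zero h hc))
    (pow_ne_zero _ hc)

end Recurrence

lemma Int.gcd_natCast_eq_one_iff_intCast_ne_zero {p : ℕ} (hp : p.Prime) (a : ℤ) :
    Int.gcd a p = 1 ↔ (a : ZMod p) ≠ 0 := by
  rw [← Int.isCoprime_iff_gcd_eq_one, isCoprime_comm,
    Prime.coprime_iff_not_dvd (Nat.prime_iff_prime_int.mp hp),
    ne_eq, ZMod.intCast_zmod_eq_zero_iff_dvd]

theorem stmt_7_general (p : ℕ) (hp : p.Prime) (c d : ℤ)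
    (hcd : (p : ℤ) ^ 2 = c ^ 2 + 4 * d ^ 2) (hcop : Int.gcd c (p : ℤ) = 1)
    (C D : ℕ → ℤ) (hC1 : C 1 = c) (hD1 : D 1 = d)
    (hCr : ∀ ℓ, 1 ≤ ℓ → C (ℓ + 1) = c * C ℓ - 4 * d * D ℓ)
    (hDr : ∀ ℓ, 1 ≤ ℓ → D (ℓ + 1) = c * D ℓ + d * C ℓ) :
    ∀ ℓ, 1 ≤ ℓ → Int.gcd (C ℓ) (p : ℤ) = 1 := by
  have : Fact p.Prime := ⟨hp⟩
  have hmod : (c : ZMod p) ^ 2 + 4 * (d : ZMod p) ^ 2 = 0 := by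
    have := congrArg (Int.cast : ℤ → ZMod p) hcd
    push_cast at this
    rw [← this, ZMod.natCast_self, zero_pow two_ne_zero]
  intro ℓ hℓ
  rw [Int.gcd_natCast_eq_one_iff_intCast_ne_zero hp] at hcop ⊢
  refine C_ne_zero (C := fun ℓ ↦ (C ℓ : ZMod p)) (D := fun ℓ ↦ (D ℓ : ZMod p)) hmod hcop
    (by simp [hC1]) (by simp [hD1]) (fun n hn ↦ ?_) (fun n hn ↦ ?_) ℓ hℓ
  · simp [hCr n hn]
  · simp [hDr n hn]

theorem stmt_7 (p : ℕ) (hp : p.Prime) (hp4 : p % 4 = 1) (c d : ℤ)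
    (hcd : (p : ℤ) ^ 2 = c ^ 2 + 4 * d ^ 2) (hcop : Int.gcd c (p : ℤ) = 1)
    (C D : ℕ → ℤ) (hC1 : C 1 = c) (hD1 : D 1 = d)
    (hCr : ∀ ℓ, 1 ≤ ℓ → C (ℓ + 1) = c * C ℓ - 4 * d * D ℓ)
    (hDr : ∀ ℓ, 1 ≤ ℓ → D (ℓ + 1) = c * D ℓ + d * C ℓ) :
    ∀ ℓ, 1 ≤ ℓ → Int.gcd (C ℓ) (p : ℤ) = 1 :=
  stmt_7_general p hp c d hcd hcop C D hC1 hD1 hCr hDr
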